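/- Let S be a metrizable topological space and U, V open subsets of S. Then the sequence M_cpt(U ∩ V) →^{Φ₁} M_cpt(U) ⊕ M_cpt(V) →^{Φ₀} M_cpt(U ∪ V) → 0 is exact, where Φ₁(ξ) = (ξ, −ξ) and Φ₀(μ, ν) = μ + ν, and a signed measure on an open subset is identified with its extension by zero to a larger open set. That is: (i) every ξ ∈ M_cpt(U ∪ V) can be written as ξ = μ + ν with μ ∈ M_cpt(U) and ν ∈ M_cpt(V); and (ii) if μ ∈ M_cpt(U) and ν ∈ M_cpt(V) satisfy μ + ν = 0 as a measure on U ∪ V, then there exists ξ ∈ M_cpt(U ∩ V) with Φ₁(ξ) = (μ, ν). -/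
import Mathlib

open MeasureTheory

/-- `D` is a determination set of the signed measure `ξ`: every measurable set contained in
the complement of `D` has measure zero. -/
def IsDeterminationSet {S : Type*} [MeasurableSpace S] (ξ : SignedMeasure S) (D : Set S) :
    Prop :=
  ∀ A : Set S, MeasurableSet A → A ⊆ Dᶜ → ξ A = 0

/-- `M_cpt O`: signed Borel measures (of finite total variation), regarded — via extension by
zero — as signed measures on the ambient space, having a compact determination set contained
in `O`. -/
def Mcpt {S : Type*} [TopologicalSpace S] [MeasurableSpace S] (O : Set S) :
    Set (SignedMeasure S) :=
  {ξ | ∃ K : Set S, K ⊆ O ∧ IsCompact K ∧ IsDeterminationSet ξ K}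

/-- Auxiliary: a signed measure splits over a measurable set. -/
theorem signedMeasure_apply_split {S : Type*} [MeasurableSpace S] (ξ : SignedMeasure S)
    {A K : Set S} (hA : MeasurableSet A) (hK : MeasurableSet K) :
    ξ A = ξ (A ∩ K) + ξ (A \ K) := by
  conv_lhs => rw [show A = (A ∩ K) ∪ (A \ K) from (Set.inter_union_diff A K).symm]
  exact ξ.of_union (Set.disjoint_sdiff_right.mono_left Set.inter_subset_right) (hA.inter hK) (hA.diff hK)

/-- **Statement 19.** For a metrizable space `S` and open sets `U`, `V ⊆ S`, the sequence
`M_cpt(U ∩ V) → M_cpt(U) ⊕ M_cpt(V) → M_cpt(U ∪ V) → 0` with `Φ₁ ξ = (ξ, -ξ)` and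
`Φ₀ (μ, ν) = μ + ν` is exact: (i) every `ξ ∈ M_cpt(U ∪ V)` splits as `ξ = μ + ν` with
`μ ∈ M_cpt U`, `ν ∈ M_cpt V`; (ii) if `μ ∈ M_cpt U`, `ν ∈ M_cpt V` and `μ + ν = 0`, then
there is `ξ ∈ M_cpt (U ∩ V)` with `(μ, ν) = (ξ, -ξ)`. -/
theorem Mcpt_exact_sequence {S : Type*} [TopologicalSpace S]
    [TopologicalSpace.MetrizableSpace S] [MeasurableSpace S] [BorelSpace S]
    {U V : Set S} (hU : IsOpen U) (hV : IsOpen V) :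
    (∀ ξ ∈ Mcpt (U ∪ V), ∃ μ ∈ Mcpt U, ∃ ν ∈ Mcpt V, ξ = μ + ν) ∧
    (∀ μ ∈ Mcpt U, ∀ ν ∈ Mcpt V, μ + ν = 0 → ∃ ξ ∈ Mcpt (U ∩ V), μ = ξ ∧ ν = -ξ) := by
  letI := TopologicalSpace.metrizableSpaceMetric S
  constructor
  · rintro ξ ⟨K, hKUV, hKc, hKdet⟩
    obtain ⟨K₁, K₂, hK₁c, hK₂c, hK₁U, hK₂V, hKeq⟩ :=
      hKc.binary_compact_cover hU hV hKUV
    have hK₁m : MeasurableSet K₁ := hK₁c.isClosed.measurableSet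
    refine ⟨ξ.restrict K₁, ⟨K₁, hK₁U, hK₁c, ?_⟩,
      ξ - ξ.restrict K₁, ⟨K₂, hK₂V, hK₂c, ?_⟩, by abel⟩
    · intro A hA hAsub
      rw [VectorMeasure.restrict_apply _ hK₁m hA]
      have : A ∩ K₁ = ∅ := by
        rw [Set.eq_empty_iff_forall_notMem]; rintro x ⟨hxA, hxK⟩; exact hAsub hxA hxK
      rw [this]; simp
    · intro A hA hAsub
      have hdiff : ξ (A \ K₁) = 0 := by
        refine hKdet _ (hA.diff hK₁m) ?_
        rintro x ⟨hxA, hxK₁⟩ hxK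
        rcases hKeq ▸ hxK with h | h
        · exact hxK₁ h
        · exact hAsub hxA h
      have := signedMeasure_apply_split ξ hA hK₁m
      rw [VectorMeasure.sub_apply, VectorMeasure.restrict_apply _ hK₁m hA, this, hdiff]
      ring
  · rintro μ ⟨Kμ, hKμU, hKμc, hKμdet⟩ ν ⟨Kν, hKνV, hKνc, hKνdet⟩ hsum
    have hν : ν = -μ := eq_neg_of_add_eq_zero_right hsum
    have hKμm : MeasurableSet Kμ := hKμc.isClosed.measurableSet
    refine ⟨μ, ⟨Kμ ∩ Kν, Set.inter_subset_inter hKμU hKνV,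
      hKμc.inter_right hKνc.isClosed, ?_⟩, rfl, by rw [hν]⟩
    intro A hA hAsub
    have h1 : μ (A \ Kμ) = 0 := hKμdet _ (hA.diff hKμm) (Set.diff_subset_compl _ _)
    have h2 : μ (A ∩ Kμ) = 0 := by
      have hν0 : ν (A ∩ Kμ) = 0 := by
        refine hKνdet _ (hA.inter hKμm) ?_
        rintro x ⟨hxA, hxKμ⟩ hxKν
        exact hAsub hxA ⟨hxKμ, hxKν⟩
      rw [hν, VectorMeasure.neg_apply, neg_eq_zero] at hν0
      exact hν0
    rw [signedMeasure_apply_split μ hA hKμm, h1, h2, add_zero]
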